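/- Let A be a real m×n matrix and b ∈ ℝ^m. If x is the unique least ℓ1-norm nonnegative solution to the system Ax = b, then x is m-sparse, i.e., ‖x‖₀ = |{i : xᵢ ≠ 0}| ≤ m. -/

import Mathlib

open Matrix

/-- `x` is the unique least ℓ1-norm nonnegative solution to the system `A x = b`. -/
def uniqueLeastL1 {m n : ℕ} (A : Matrix (Fin m) (Fin n) ℝ) (b : Fin m → ℝ)
    (x : Fin n → ℝ) : Prop :=
  A.mulVec x = b ∧ 0 ≤ x ∧
    ∀ w : Fin n → ℝ, A.mulVec w = b → 0 ≤ w → w ≠ x → ∑ i, |x i| < ∑ i, |w i|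

/-!
If the support of `x` had more than `m` elements, the corresponding columns of `A` would be
linearly dependent, giving a nonzero `z ∈ ker A` supported in the support of `x`. For small
`t ≠ 0` both `x + t z` and `x - t z` are nonnegative solutions, and their ℓ1-norms (plain sums, by
nonnegativity) average to `‖x‖₁`, so one of them is no longer than `x`, contradicting uniqueness.
-/

open Filter Topology Module

theorem LinearMap.exists_ne_zero_apply_eq_zero_of_finrank_lt_card {K V ι : Type*} [Field K]
    [AddCommGroup V] [Module K V] [FiniteDimensional K V] (f : (ι → K) →ₗ[K] V)
    (s : Finset ι) (hs : finrank K V < s.card) :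
    ∃ z ≠ 0, f z = 0 ∧ ∀ i ∉ s, z i = 0 := by
  set e := Function.ExtendByZero.linearMap K ((↑) : s → ι)
  have hker : ker (f ∘ₗ e) ≠ ⊥ := ker_ne_bot_of_finrank_lt (by simpa using hs)
  obtain ⟨z, hz, hz0⟩ := Submodule.exists_mem_ne_zero_of_ne_bot hker
  refine ⟨e z, fun h ↦ hz0 ?_, hz, fun i hi ↦ Function.extend_apply' _ _ _ ?_⟩
  · exact Function.extend_injective Subtype.val_injective (0 : ι → K)
      (h.trans (map_zero e).symm)
  · rintro ⟨j, rfl⟩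
    exact hi j.2

theorem eventually_nonneg_add_smul {ι : Type*} [Finite ι] {x z : ι → ℝ} (hx : 0 ≤ x)
    (hz : ∀ i, x i = 0 → z i = 0) : ∀ᶠ t in 𝓝 (0 : ℝ), 0 ≤ x + t • z := by
  simp only [Pi.le_def, eventually_all]
  intro i
  rcases (hx i).eq_or_lt with hxi | hxi
  · simp [← hxi, hz i hxi.symm]
  · have : Tendsto (fun t : ℝ ↦ x i + t * z i) (𝓝 0) (𝓝 (x i)) :=
      (by fun_prop : Continuous fun t : ℝ ↦ x i + t * z i).tendsto' 0 _ (by simp)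
    filter_upwards [this.eventually_const_lt hxi] with t ht
    simpa using ht.le

theorem uniqueLeastL1.eq_zero_of_mulVec_eq_zero {m n : ℕ} {A : Matrix (Fin m) (Fin n) ℝ}
    {b : Fin m → ℝ} {x z : Fin n → ℝ} (h : uniqueLeastL1 A b x) (hAz : A *ᵥ z = 0)
    (hz : ∀ i, x i = 0 → z i = 0) : z = 0 := by
  obtain ⟨hAx, hx, hmin⟩ := h
  by_contra hz0
  have hev := (eventually_nonneg_add_smul hx hz).and
    (eventually_nonneg_add_smul (z := -z) hx fun i hi ↦ by simp [hz i hi])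
  obtain ⟨t, ⟨hadd, hsub⟩, ht⟩ := ((hev.filter_mono nhdsWithin_le_nhds).and
    (self_mem_nhdsWithin : {0}ᶜ ∈ 𝓝[≠] (0 : ℝ))).exists
  have hsol (s : ℝ) : A *ᵥ (x + s • z) = b := by
    rw [mulVec_add, mulVec_smul, hAz, hAx, smul_zero, add_zero]
  have hne (s : ℝ) (hs : s ≠ 0) : x + s • z ≠ x := fun h ↦ hz0 (by simpa [hs] using h)
  have l1_eq_sum (w : Fin n → ℝ) (hw : 0 ≤ w) : ∑ i, |w i| = ∑ i, w i :=
    Finset.sum_congr rfl fun i _ ↦ abs_of_nonneg (hw i)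
  rw [smul_neg, ← neg_smul] at hsub
  have h₁ := hmin _ (hsol _) hadd (hne _ ht)
  have h₂ := hmin _ (hsol _) hsub (hne _ (neg_ne_zero.2 ht))
  rw [l1_eq_sum x hx, l1_eq_sum _ hadd] at h₁
  rw [l1_eq_sum x hx, l1_eq_sum _ hsub] at h₂
  simp only [Pi.add_apply, Pi.smul_apply, smul_eq_mul, Finset.sum_add_distrib,
    ← Finset.mul_sum] at h₁ h₂
  linarith

/-- If `x` is the unique least ℓ1-norm nonnegative solution to `A x = b`, then
`x` is `m`-sparse: `‖x‖₀ = |{i : x i ≠ 0}| ≤ m`. -/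
theorem stmt_7 {m n : ℕ} (A : Matrix (Fin m) (Fin n) ℝ) (b : Fin m → ℝ)
    (x : Fin n → ℝ) (h : uniqueLeastL1 A b x) :
    {i : Fin n | x i ≠ 0}.ncard ≤ m := by
  rw [Set.ncard_eq_toFinset_card']
  by_contra! hcard
  obtain ⟨z, hz0, hAz, hz⟩ := A.mulVecLin.exists_ne_zero_apply_eq_zero_of_finrank_lt_card _
    (by simpa using hcard)
  exact hz0 (h.eq_zero_of_mulVec_eq_zero hAz (fun i hi ↦ hz i (by simpa using hi)))
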